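/- Let H = ℓ²(ℕ, ℝ) and let R : H → H be the right-shift operator, the bounded linear map defined by R(x₀, x₁, x₂, …) = (0, x₀, x₁, …). Then the adjoint R* is the left shift L(x₀, x₁, x₂, …) = (x₁, x₂, …), and R* ∘ R = id while R ∘ R* ≠ id; consequently R is an isometry that is not normal, and the map T := (1/2) • (R + id) is iso-averaged (2 • (T* ∘ T) = T + T*) but not normal (T* ∘ T ≠ T ∘ T*). -/

import Mathlib

/-!
Coordinates in `ℓ²` are inner products with the unit vectors `eₙ`, and `R eₙ = eₙ₊₁`, so `R*`
reads off the coordinates shifted by one. Hence `R*R = 1`, while `R R*` kills `e₀`.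

For `T = (1/2)(R + 1)` we have `R = 2T - 1`. In any real *-algebra, `2 T*T = T + T*` is
equivalent to `(2T - 1)*(2T - 1) = 1`, and normality of `T` passes to `2T - 1`; so `T` is
iso-averaged because `R` is an isometry, and not normal because `R` is not.
-/

/-- The map `T := (1/2) • (R + id)` on `ℓ²(ℕ, ℝ)`. -/
noncomputable def halfAvg (R : lp (fun _ : ℕ => ℝ) 2 →L[ℝ] lp (fun _ : ℕ => ℝ) 2) :
    lp (fun _ : ℕ => ℝ) 2 →L[ℝ] lp (fun _ : ℕ => ℝ) 2 :=
  (1 / 2 : ℝ) • (R + ContinuousLinearMap.id ℝ (lp (fun _ : ℕ => ℝ) 2))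

section StarAlgebra

variable {A : Type*} [Ring A] [StarRing A] [Algebra ℝ A] [StarModule ℝ A]

theorem two_smul_star_mul_self_eq_add_star_iff (t : A) :
    (2 : ℝ) • (star t * t) = t + star t ↔
      star ((2 : ℝ) • t - 1) * ((2 : ℝ) • t - 1) = 1 := by
  have key : star ((2 : ℝ) • t - 1) * ((2 : ℝ) • t - 1) - 1 =
      (2 : ℝ) • ((2 : ℝ) • (star t * t) - (t + star t)) := by
    simp only [star_sub, star_smul, star_one, star_trivial, sub_mul, mul_sub, smul_mul_assoc,
      mul_smul_comm, one_mul, mul_one]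
    module
  rw [← sub_eq_zero (b := (1 : A)), key, smul_eq_zero, sub_eq_zero]
  norm_num

theorem IsStarNormal.smul_sub_one (r : ℝ) (t : A) [IsStarNormal t] :
    IsStarNormal (r • t - 1) :=
  Commute.isStarNormal_sub <| by simp

end StarAlgebra

open scoped lp
open ContinuousLinearMap

theorem lp.apply_eq_inner_single {ι 𝕜 : Type*} [RCLike 𝕜] [DecidableEq ι] (x : ℓ²(ι, 𝕜))
    (i : ι) : x i = inner 𝕜 (lp.single 2 i 1) x := by
  simp [lp.inner_single_left]

theorem two_smul_halfAvg_sub_one (R : ℓ²(ℕ, ℝ) →L[ℝ] ℓ²(ℕ, ℝ)) :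
    (2 : ℝ) • halfAvg R - 1 = R := by
  rw [halfAvg, smul_smul, one_def]
  norm_num

section RightShift

variable {R : ℓ²(ℕ, ℝ) →L[ℝ] ℓ²(ℕ, ℝ)}

theorem rightShift_single (hR0 : ∀ x : ℓ²(ℕ, ℝ), R x 0 = 0)
    (hRs : ∀ (x : ℓ²(ℕ, ℝ)) (n : ℕ), R x (n + 1) = x n) (n : ℕ) (a : ℝ) :
    R (lp.single 2 n a) = lp.single 2 (n + 1) a := by
  ext j
  cases j with
  | zero => simp [hR0]
  | succ j => simp [hRs, Pi.single_apply]

theorem adjoint_rightShift_apply (hR0 : ∀ x : ℓ²(ℕ, ℝ), R x 0 = 0)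
    (hRs : ∀ (x : ℓ²(ℕ, ℝ)) (n : ℕ), R x (n + 1) = x n) (x : ℓ²(ℕ, ℝ)) (n : ℕ) :
    adjoint R x n = x (n + 1) := by
  rw [lp.apply_eq_inner_single, adjoint_inner_right, rightShift_single hR0 hRs,
    ← lp.apply_eq_inner_single]

end RightShift

/-- Let `R` be the right shift on `H = ℓ²(ℕ, ℝ)`
(`R(x₀, x₁, …) = (0, x₀, x₁, …)`). Then its adjoint is the left shift
`L(x₀, x₁, …) = (x₁, x₂, …)`, `R* ∘ R = id` while `R ∘ R* ≠ id` (so `R` is an isometry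
that is not normal), and `T := (1/2) • (R + id)` is iso-averaged
(`2 • (T* ∘ T) = T + T*`) but not normal (`T* ∘ T ≠ T ∘ T*`). -/
theorem rightShift_isoAveraged_not_normal
    (R : lp (fun _ : ℕ => ℝ) 2 →L[ℝ] lp (fun _ : ℕ => ℝ) 2)
    (hR0 : ∀ x : lp (fun _ : ℕ => ℝ) 2, R x 0 = 0)
    (hRs : ∀ (x : lp (fun _ : ℕ => ℝ) 2) (n : ℕ), R x (n + 1) = x n) :
    (∀ (x : lp (fun _ : ℕ => ℝ) 2) (n : ℕ),
        ContinuousLinearMap.adjoint R x n = x (n + 1)) ∧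
      ContinuousLinearMap.adjoint R ∘L R =
        ContinuousLinearMap.id ℝ (lp (fun _ : ℕ => ℝ) 2) ∧
      R ∘L ContinuousLinearMap.adjoint R ≠
        ContinuousLinearMap.id ℝ (lp (fun _ : ℕ => ℝ) 2) ∧
      (∀ x : lp (fun _ : ℕ => ℝ) 2, ‖R x‖ = ‖x‖) ∧
      ContinuousLinearMap.adjoint R ∘L R ≠ R ∘L ContinuousLinearMap.adjoint R ∧
      (2 : ℝ) • (ContinuousLinearMap.adjoint (halfAvg R) ∘L halfAvg R) =
        halfAvg R + ContinuousLinearMap.adjoint (halfAvg R) ∧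
      ContinuousLinearMap.adjoint (halfAvg R) ∘L halfAvg R ≠
        halfAvg R ∘L ContinuousLinearMap.adjoint (halfAvg R) := by
  have hadj := adjoint_rightShift_apply hR0 hRs
  have hisom : adjoint R ∘L R = 1 := by
    ext x n
    simp [hadj, hRs]
  have hcoisom : R ∘L adjoint R ≠ 1 := by
    intro h
    have h0 := congr($h (lp.single 2 0 1) 0)
    simp [hR0] at h0
  have hR_not_normal : adjoint R ∘L R ≠ R ∘L adjoint R := hisom ▸ hcoisom.symm
  refine ⟨hadj, hisom, hcoisom, (norm_map_iff_adjoint_comp_self R).mpr hisom, hR_not_normal,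
    (two_smul_star_mul_self_eq_add_star_iff _).mpr ?_, fun hT ↦ hR_not_normal ?_⟩
  · rw [two_smul_halfAvg_sub_one]
    exact hisom
  · have : IsStarNormal (halfAvg R) := ⟨hT⟩
    have hR_normal := (IsStarNormal.smul_sub_one 2 (halfAvg R)).star_comm_self
    rw [two_smul_halfAvg_sub_one] at hR_normal
    exact hR_normal
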